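/- arXiv:1707.02582 — 2 statements merged into one kernel-verified Lean document; each statement's English description precedes it below -/
import Mathlib

section
/- Let A be the algebra over the bigraded commutative ring R = F_2[a,u] given by A = R[tau_0, tau_1, ..., xi_1, xi_2, ...]/(tau_i^2 = (u + a*tau_0)*xi_{i+1} + a*tau_{i+1} for all i >= 0). Then A is a free R-module, with basis given by monomials tau_0^{e_0} tau_1^{e_1} ... xi_1^{k_1} xi_2^{k_2} ... with e_i in {0,1} and k_i >= 0. -/
/-!
STATEMENT 6 (Hu–Kriz presentation): let `R = F₂[a,u]` and
`A = R[τ₀, τ₁, …, ξ₁, ξ₂, …]/(τᵢ² = (u + a τ₀) ξ_{i+1} + a τ_{i+1})`.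
Then `A` is a free `R`-module with basis the admissible monomials
`τ₀^{ε₀} τ₁^{ε₁} ⋯ ξ₁^{k₁} ξ₂^{k₂} ⋯` with `εᵢ ∈ {0,1}` and `kᵢ ≥ 0`.
Here `tauXi (Sum.inl i) = τᵢ` and `tauXi (Sum.inr i) = ξ_{i+1}`.
-/

open MvPolynomial

noncomputable section

abbrev Rcoef : Type := MvPolynomial (Fin 2) (ZMod 2)

abbrev aC : Rcoef := X 0
abbrev uC : Rcoef := X 1

/-- Polynomial ring `R[τ₀, τ₁, …, ξ₁, ξ₂, …]`. -/
abbrev Ppoly : Type := MvPolynomial (ℕ ⊕ ℕ) Rcoef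

def tau (i : ℕ) : Ppoly := X (Sum.inl i)

/-- `xiv i` models `ξ_{i+1}`. -/
def xiv (i : ℕ) : Ppoly := X (Sum.inr i)

/-- The Hu–Kriz relation `τᵢ² - ((u + a τ₀) ξ_{i+1} + a τ_{i+1})`. -/
def huKrizRel (i : ℕ) : Ppoly :=
  tau i ^ 2 - ((C uC + C aC * tau 0) * xiv i + C aC * tau (i + 1))

abbrev huKrizIdeal : Ideal Ppoly := Ideal.span (Set.range huKrizRel)

/-- The quotient algebra `A`. -/
abbrev Aalg : Type := Ppoly ⧸ huKrizIdeal


/-!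
Orient the relations as rewriting rules `τᵢ² ↦ (u + a τ₀) ξ_{i+1} + a τ_{i+1}`. Each rule lowers
the total τ-degree, so rewriting terminates; and since the leading monomials `τᵢ²` are pairwise
coprime, two rules applicable to one monomial can be applied one after the other in either order
with the same result (Buchberger's coprime criterion). So every monomial has a well-defined normal
form, a combination of admissible monomials. Extended linearly, the normal form kills the ideal of
relations and fixes the admissible monomials, which are therefore independent in the quotient;
termination shows that they span it.
-/

open Function

lemma Finsupp.le_tsub_of_disjoint {σ : Type*} {a b m : σ →₀ ℕ} (hab : Disjoint a b) (ha : a ≤ m)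
    (hb : b ≤ m) : a ≤ m - b := by
  intro x
  have : a x = 0 ∨ b x = 0 := by
    by_contra! h
    exact Finset.disjoint_left.mp (Finsupp.disjoint_iff.mp hab) (by simpa using h.1)
      (by simpa using h.2)
  have := ha x; have := hb x
  simp only [Finsupp.tsub_apply]
  omega

namespace MvPolynomial

section CommSemiring

variable {σ R : Type*} [CommSemiring R]

lemma smul_monomial_one (m : σ →₀ ℕ) (c : R) : c • monomial m (1 : R) = monomial m c := by
  rw [smul_monomial, smul_eq_mul, mul_one]

lemma monomial_one_mul_eq_sum (m : σ →₀ ℕ) (p : MvPolynomial σ R) :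
    monomial m 1 * p = ∑ n ∈ p.support, monomial (m + n) (coeff n p) := by
  conv_lhs => rw [p.as_sum]
  simp only [Finset.mul_sum, monomial_mul, one_mul]

lemma monomial_sumElim_one {τ : Type*} (f : σ →₀ ℕ) (g : τ →₀ ℕ) :
    monomial (Finsupp.sumElim f g) (1 : R) =
      (f.prod fun i e => X (Sum.inl i) ^ e) * (g.prod fun i k => X (Sum.inr i) ^ k) := by
  rw [monomial_eq, C_1, one_mul, Finsupp.prod, Finsupp.sumElim_support, Finset.prod_disjSum]
  rfl

end CommSemiring

variable {σ ι R : Type*} [CommRing R]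

-- The ideal of the rewriting rules `X ^ d i ↦ r i`.
def rewriteIdeal (d : ι → σ →₀ ℕ) (r : ι → MvPolynomial σ R) : Ideal (MvPolynomial σ R) :=
  Ideal.span (Set.range fun i => monomial (d i) 1 - r i)

abbrev ReducedExponent (d : ι → σ →₀ ℕ) : Type _ := {m : σ →₀ ℕ // ∀ i, ¬ d i ≤ m}

section NormalForm

variable {d : ι → σ →₀ ℕ} {r : ι → MvPolynomial σ R} {w : (σ →₀ ℕ) →+ ℕ}

lemma weight_tsub_add_lt (hr : ∀ i, ∀ n ∈ (r i).support, w n < w (d i)) {m : σ →₀ ℕ} {i : ι}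
    (hi : d i ≤ m) {n : σ →₀ ℕ} (hn : n ∈ (r i).support) : w (m - d i + n) < w m := by
  conv_rhs => rw [← tsub_add_cancel_of_le hi]
  simpa only [map_add] using Nat.add_lt_add_left (hr i n hn) _

-- The rule applied is chosen arbitrarily; `normalForm_eq_rewriteAt` shows that the choice is
-- irrelevant.
open Classical in
def normalForm (hr : ∀ i, ∀ n ∈ (r i).support, w n < w (d i))
    (m : σ →₀ ℕ) : ReducedExponent d →₀ R :=
  if h : ∃ i, d i ≤ m then
    ∑ n ∈ (r h.choose).support.attach,
      coeff n.1 (r h.choose) • normalForm hr (m - d h.choose + n.1)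
  else Finsupp.single ⟨m, not_exists.mp h⟩ 1
termination_by w m
decreasing_by exact weight_tsub_add_lt hr h.choose_spec n.2

variable (hr : ∀ i, ∀ n ∈ (r i).support, w n < w (d i))
include hr

def rewriteAt (m : σ →₀ ℕ) (i : ι) : ReducedExponent d →₀ R :=
  ∑ n ∈ (r i).support, coeff n (r i) • normalForm hr (m + n)

lemma normalForm_of_reduced {m : σ →₀ ℕ} (h : ∀ i, ¬ d i ≤ m) :
    normalForm hr m = Finsupp.single ⟨m, h⟩ 1 := by
  rw [normalForm, dif_neg (not_exists.mpr h)]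

lemma normalForm_of_exists {m : σ →₀ ℕ} (h : ∃ i, d i ≤ m) :
    normalForm hr m = rewriteAt hr (m - d h.choose) h.choose := by
  rw [normalForm, dif_pos h, rewriteAt,
    Finset.sum_attach _ fun n => coeff n (r h.choose) • normalForm hr (m - d h.choose + n)]

lemma sum_smul_rewriteAt_comm (ρ : σ →₀ ℕ) (i j : ι) :
    ∑ n ∈ (r j).support, coeff n (r j) • rewriteAt hr (ρ + n) i =
      ∑ n ∈ (r i).support, coeff n (r i) • rewriteAt hr (ρ + n) j := by
  simp only [rewriteAt, Finset.smul_sum, smul_smul]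
  rw [Finset.sum_comm]
  refine Finset.sum_congr rfl fun n _ => Finset.sum_congr rfl fun n' _ => ?_
  rw [mul_comm, add_right_comm]

lemma normalForm_eq_rewriteAt (hd : Pairwise (Disjoint on d)) {m : σ →₀ ℕ} {i : ι}
    (hi : d i ≤ m) : normalForm hr m = rewriteAt hr (m - d i) i := by
  induction hw : w m using Nat.strong_induction_on generalizing m i with
  | _ k IH =>
  have hex : ∃ j, d j ≤ m := ⟨i, hi⟩
  obtain ⟨j, hj, hnf⟩ : ∃ j, d j ≤ m ∧ normalForm hr m = rewriteAt hr (m - d j) j :=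
    ⟨_, hex.choose_spec, normalForm_of_exists hr hex⟩
  rw [hnf]
  obtain rfl | hne := eq_or_ne j i
  · rfl
  have hij : d i ≤ m - d j := Finsupp.le_tsub_of_disjoint (hd hne.symm) hi hj
  have hji : d j ≤ m - d i := Finsupp.le_tsub_of_disjoint (hd hne) hj hi
  have hrewrite : ∀ {a b : ι}, d b ≤ m → d a ≤ m - d b → ∀ n ∈ (r b).support,
      normalForm hr (m - d b + n) = rewriteAt hr (m - d b - d a + n) a := by
    intro a b hb hab n hn
    rw [IH _ (hw ▸ weight_tsub_add_lt hr hb hn) (le_add_right hab) rfl,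
      tsub_add_eq_add_tsub hab]
  calc rewriteAt hr (m - d j) j
      = ∑ n ∈ (r j).support, coeff n (r j) • rewriteAt hr (m - d j - d i + n) i :=
        Finset.sum_congr rfl fun n hn => by rw [hrewrite hj hij n hn]
    _ = ∑ n ∈ (r i).support, coeff n (r i) • rewriteAt hr (m - d j - d i + n) j :=
        sum_smul_rewriteAt_comm hr _ i j
    _ = rewriteAt hr (m - d i) i :=
        Finset.sum_congr rfl fun n hn => by rw [hrewrite hi hji n hn, tsub_right_comm]

def normalFormLinear : MvPolynomial σ R →ₗ[R] ReducedExponent d →₀ R :=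
  (basisMonomials σ R).constr R (normalForm hr)

lemma normalFormLinear_monomial (m : σ →₀ ℕ) (c : R) :
    normalFormLinear hr (monomial m c) = c • normalForm hr m := by
  rw [← smul_monomial_one, map_smul]
  exact congrArg (c • ·) ((basisMonomials σ R).constr_basis R (normalForm hr) m)

lemma mk_monomial_mem_span_reduced (m : σ →₀ ℕ) :
    Ideal.Quotient.mk (rewriteIdeal d r) (monomial m 1) ∈ Submodule.span R
      (Set.range fun e : ReducedExponent d => Ideal.Quotient.mk _ (monomial e.1 1)) := by
  induction hw : w m using Nat.strong_induction_on generalizing m with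
  | _ k IH =>
  by_cases h : ∃ i, d i ≤ m
  · obtain ⟨i, hi⟩ := h
    have hmem : monomial m 1 - monomial (m - d i) 1 * r i ∈ rewriteIdeal d r := by
      have : monomial m (1 : R) - monomial (m - d i) 1 * r i =
          monomial (m - d i) 1 * (monomial (d i) 1 - r i) := by
        rw [mul_sub, monomial_mul, one_mul, tsub_add_cancel_of_le hi]
      exact this ▸ Ideal.mul_mem_left _ _ (Ideal.subset_span ⟨i, rfl⟩)
    rw [Ideal.Quotient.eq.mpr hmem, monomial_one_mul_eq_sum, map_sum]
    refine Submodule.sum_mem _ fun n hn => ?_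
    rw [← smul_monomial_one]
    exact Submodule.smul_mem _ _ (IH _ (hw ▸ weight_tsub_add_lt hr hi hn) _ rfl)
  · exact Submodule.subset_span ⟨⟨m, not_exists.mp h⟩, rfl⟩

variable (hd : Pairwise (Disjoint on d))
include hd

lemma normalFormLinear_mul_generator (q : MvPolynomial σ R) (i : ι) :
    normalFormLinear hr (q * (monomial (d i) 1 - r i)) = 0 := by
  induction q using MvPolynomial.induction_on' with
  | monomial m c =>
    rw [← smul_monomial_one, smul_mul_assoc, map_smul, mul_sub,
      monomial_mul, one_mul, monomial_one_mul_eq_sum, map_sub, map_sum,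
      normalFormLinear_monomial, one_smul,
      normalForm_eq_rewriteAt hr hd le_add_self, add_tsub_cancel_right]
    simp only [normalFormLinear_monomial, rewriteAt, sub_self, smul_zero]
  | add p q hp hq => rw [add_mul, map_add, hp, hq, add_zero]

lemma normalFormLinear_eq_zero_of_mem {x : MvPolynomial σ R} (hx : x ∈ rewriteIdeal d r) :
    normalFormLinear hr x = 0 := by
  obtain ⟨c, rfl⟩ := Finsupp.mem_ideal_span_range_iff_exists_finsupp.mp hx
  simp only [Finsupp.sum, map_sum, normalFormLinear_mul_generator hr hd, Finset.sum_const_zero]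

def quotientNormalForm :
    (MvPolynomial σ R ⧸ rewriteIdeal d r) →ₗ[R] ReducedExponent d →₀ R :=
  ((rewriteIdeal d r).restrictScalars R).liftQ (normalFormLinear hr)
      (fun _ hx => normalFormLinear_eq_zero_of_mem hr hd hx) ∘ₗ
    (Submodule.Quotient.restrictScalarsEquiv R (rewriteIdeal d r)).symm.toLinearMap

lemma quotientNormalForm_mk (x : MvPolynomial σ R) :
    quotientNormalForm hr hd (Ideal.Quotient.mk _ x) = normalFormLinear hr x :=
  rfl

lemma linearIndependent_mk_monomial_reduced :
    LinearIndependent R fun e : ReducedExponent d =>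
      Ideal.Quotient.mk (rewriteIdeal d r) (monomial e.1 1) := by
  refine LinearIndependent.of_comp (quotientNormalForm hr hd) ?_
  convert Finsupp.linearIndependent_single_one R (ReducedExponent d) with e
  simp only [Function.comp_apply, quotientNormalForm_mk, normalFormLinear_monomial, one_smul,
    normalForm_of_reduced hr e.2]

def reducedMonomialBasis :
    Module.Basis (ReducedExponent d) R (MvPolynomial σ R ⧸ rewriteIdeal d r) :=
  .mk (linearIndependent_mk_monomial_reduced hr hd) <| by
    rintro x -
    obtain ⟨p, rfl⟩ := Ideal.Quotient.mk_surjective x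
    induction p using MvPolynomial.induction_on' with
    | monomial m c =>
      rw [← smul_monomial_one]
      exact Submodule.smul_mem _ _ (mk_monomial_mem_span_reduced hr m)
    | add p q hp hq => rw [map_add]; exact Submodule.add_mem _ hp hq

lemma reducedMonomialBasis_apply (e : ReducedExponent d) :
    reducedMonomialBasis hr hd e = Ideal.Quotient.mk (rewriteIdeal d r) (monomial e.1 1) :=
  Module.Basis.mk_apply ..

end NormalForm
end MvPolynomial

abbrev huKrizRhs (i : ℕ) : Ppoly := (C uC + C aC * tau 0) * xiv i + C aC * tau (i + 1)

abbrev tauSquareExponent (i : ℕ) : ℕ ⊕ ℕ →₀ ℕ := Finsupp.single (Sum.inl i) 2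

abbrev tauDegree : (ℕ ⊕ ℕ →₀ ℕ) →+ ℕ := Finsupp.weight (Sum.elim 1 0)

lemma huKrizIdeal_eq_rewriteIdeal : huKrizIdeal = rewriteIdeal tauSquareExponent huKrizRhs := by
  rw [huKrizIdeal, rewriteIdeal]
  congr! with i
  rw [huKrizRel, tau, X_pow_eq_monomial]

lemma huKrizRhs_eq_sum_monomial (i : ℕ) : huKrizRhs i =
    monomial (Finsupp.single (Sum.inr i) 1) uC +
      monomial (Finsupp.single (Sum.inl 0) 1 + Finsupp.single (Sum.inr i) 1) aC +
      monomial (Finsupp.single (Sum.inl (i + 1)) 1) aC := by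
  simp only [huKrizRhs, tau, xiv, X, C_mul_monomial, add_mul, monomial_mul, mul_one]

lemma tauDegree_lt_of_mem_support {i : ℕ} {n : ℕ ⊕ ℕ →₀ ℕ} (hn : n ∈ (huKrizRhs i).support) :
    tauDegree n < tauDegree (tauSquareExponent i) := by
  classical
  rw [huKrizRhs_eq_sum_monomial] at hn
  rcases Finset.mem_union.mp (support_add hn) with hn | hn
  · rcases Finset.mem_union.mp (support_add hn) with hn | hn <;>
      rw [Finset.mem_singleton.mp (support_monomial_subset hn)] <;> simp [Finsupp.weight_single]
  · rw [Finset.mem_singleton.mp (support_monomial_subset hn)]; simp [Finsupp.weight_single]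

lemma pairwise_disjoint_tauSquareExponent : Pairwise (Disjoint on tauSquareExponent) := by
  intro i j hij
  rw [onFun, Finsupp.disjoint_iff, Finsupp.support_single _ two_ne_zero,
    Finsupp.support_single _ two_ne_zero, Finset.disjoint_singleton]
  simpa using hij

def admissibleEquiv : ReducedExponent tauSquareExponent ≃
    {e : ℕ →₀ ℕ // ∀ i, e i ≤ 1} × (ℕ →₀ ℕ) :=
  (Finsupp.sumFinsuppEquivProdFinsupp.subtypeEquiv fun m => by
    simp [Finsupp.single_le_iff]).trans Equiv.prodSubtypeFstEquivSubtypeProd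

theorem stmt6 :
    ∃ b : Module.Basis ({e : ℕ →₀ ℕ // ∀ i, e i ≤ 1} × (ℕ →₀ ℕ)) Rcoef Aalg,
      ∀ p : {e : ℕ →₀ ℕ // ∀ i, e i ≤ 1} × (ℕ →₀ ℕ),
        b p = Ideal.Quotient.mk huKrizIdeal
          ((p.1.1.prod fun i e => tau i ^ e) *
            (p.2.prod fun i k => xiv i ^ k)) := by
  let b := reducedMonomialBasis (fun _ _ => tauDegree_lt_of_mem_support)
    pairwise_disjoint_tauSquareExponent
  refine ⟨(b.reindex admissibleEquiv).map
    (Ideal.quotientEquivAlgOfEq Rcoef huKrizIdeal_eq_rewriteIdeal.symm).toLinearEquiv,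
    fun p => ?_⟩
  rw [Module.Basis.map_apply, Module.Basis.reindex_apply, reducedMonomialBasis_apply]
  exact congrArg _ (monomial_sumElim_one p.1.1 p.2)

end
end

section
/- Let S be a commutative ring, t an element of S, and M an S-module. If M is t-torsion-free and the natural square with vertices M, M[t^{-1}], M^\wedge_t (the t-adic completion), and M^\wedge_t[t^{-1}] commutes, then under the hypothesis that M is finitely generated over a Noetherian S, the square is a pullback: M is the fiber product of M[t^{-1}] and M^\wedge_t over M^\wedge_t[t^{-1}]. -/
/-!
Write `x = m₀ / tⁿ`. Since the completion has no `t`-torsion, the compatibility condition says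
exactly that the image of `m₀` in `M^∧_t` equals `tⁿ • y`. Reducing modulo `tⁿ` (the map
`M ⧸ tⁿM → M^∧_t ⧸ tⁿ M^∧_t` is injective, as `M^∧_t` surjects onto `M ⧸ tⁿM`) gives
`m₀ = tⁿ • m` for some `m : M`, and this `m` maps to `x` and, cancelling `tⁿ` in `M^∧_t`, to `y`.
Uniqueness is the injectivity of `M → M[t⁻¹]`.
-/

open Pointwise

section

variable {S : Type*} [CommRing S] {M : Type*} [AddCommGroup M] [Module S M]

theorem Submodule.mem_span_singleton_pow_smul_top_iff (t : S) (n : ℕ) (m : M) :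
    m ∈ (Ideal.span {t}) ^ n • (⊤ : Submodule S M) ↔ ∃ m' : M, t ^ n • m' = m := by
  simp [Ideal.span_singleton_pow, Submodule.ideal_span_singleton_smul,
    Submodule.mem_smul_pointwise_iff_exists]

theorem IsSMulRegular.of_mem_powers {t c : S} (ht : IsSMulRegular M t)
    (hc : c ∈ Submonoid.powers t) : IsSMulRegular M c := by
  obtain ⟨n, rfl⟩ := hc
  exact ht.pow n

theorem AdicCompletion.mem_pow_smul_top_of_of_mem (I : Ideal S) {n : ℕ} {m : M}
    (h : AdicCompletion.of I M m ∈ I ^ n • (⊤ : Submodule S (AdicCompletion I M))) :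
    m ∈ I ^ n • (⊤ : Submodule S M) := by
  have := AdicCompletion.pow_smul_top_le_ker_eval I n h
  rwa [LinearMap.mem_ker, AdicCompletion.eval_of, Submodule.mkQ_apply,
    Submodule.Quotient.mk_eq_zero] at this

theorem AdicCompletion.exists_pow_smul_eq_of_of_eq_pow_smul {t : S} {n : ℕ} {m : M}
    {y : AdicCompletion (Ideal.span {t}) M}
    (h : AdicCompletion.of (Ideal.span {t}) M m = t ^ n • y) :
    ∃ m' : M, t ^ n • m' = m := by
  refine (Submodule.mem_span_singleton_pow_smul_top_iff t n m).mp
    (AdicCompletion.mem_pow_smul_top_of_of_mem _ ?_)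
  exact h ▸ (Submodule.mem_span_singleton_pow_smul_top_iff t n _).mpr ⟨y, rfl⟩

theorem AdicCompletion.isSMulRegular_span_singleton {t : S} (ht : IsSMulRegular M t) :
    IsSMulRegular (AdicCompletion (Ideal.span {t}) M) t := by
  refine IsSMulRegular.of_right_eq_zero_of_smul fun z hz ↦ AdicCompletion.ext fun n ↦ ?_
  obtain ⟨a, ha⟩ := Submodule.Quotient.mk_surjective _ (z.val (n + 1))
  have hta : t • a ∈ (Ideal.span {t}) ^ (n + 1) • (⊤ : Submodule S M) := by
    rw [← Submodule.Quotient.mk_eq_zero, Submodule.Quotient.mk_smul, ha,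
      ← AdicCompletion.val_smul_apply, hz, AdicCompletion.val_zero_apply]
  obtain ⟨w, hw⟩ := (Submodule.mem_span_singleton_pow_smul_top_iff t _ _).mp hta
  have haw : a = t ^ n • w :=
    ht (show t • a = t • t ^ n • w by rw [← hw, ← mul_smul, pow_succ'])
  rw [AdicCompletion.val_zero_apply,
    ← AdicCompletion.val_apply_mem_smul_top_iff _ (Nat.le_succ n), ← ha, haw,
    Submodule.Quotient.mk_smul]
  exact (Submodule.mem_span_singleton_pow_smul_top_iff t n _).mpr ⟨_, rfl⟩

theorem LocalizedModule.existsUnique_of_map_eq_mkLinearMap {N : Type*} [AddCommGroup N]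
    [Module S N] {t : S} (f : M →ₗ[S] N) (hM : IsSMulRegular M t) (hN : IsSMulRegular N t)
    (hdiv : ∀ (n : ℕ) (m : M) (y : N), f m = t ^ n • y → ∃ m' : M, t ^ n • m' = m)
    (x : LocalizedModule (Submonoid.powers t) M) (y : N)
    (hxy : IsLocalizedModule.map (Submonoid.powers t)
        (LocalizedModule.mkLinearMap (Submonoid.powers t) M)
        (LocalizedModule.mkLinearMap (Submonoid.powers t) N) f x =
      LocalizedModule.mkLinearMap (Submonoid.powers t) N y) :
    ∃! m : M, LocalizedModule.mkLinearMap (Submonoid.powers t) M m = x ∧ f m = y := by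
  have hinj : Function.Injective (LocalizedModule.mkLinearMap (Submonoid.powers t) M) :=
    (IsLocalizedModule.injective_iff_isRegular _ _).mpr fun c ↦ hM.of_mem_powers c.2
  induction x using LocalizedModule.induction_on with
  | h m₀ s =>
    obtain ⟨n, hn⟩ : ∃ n : ℕ, t ^ n = s := s.2
    rw [IsLocalizedModule.map_LocalizedModules, LocalizedModule.mkLinearMap_apply,
      LocalizedModule.mk_eq] at hxy
    obtain ⟨u, hu⟩ := hxy
    have hfm₀ : f m₀ = t ^ n • y := by
      rw [hn]
      simpa [Submonoid.smul_def] using (hN.of_mem_powers u.2) hu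
    obtain ⟨m, rfl⟩ := hdiv n m₀ y hfm₀
    have hmk : LocalizedModule.mkLinearMap (Submonoid.powers t) M m =
        LocalizedModule.mk (t ^ n • m) s :=
      LocalizedModule.mk_eq.mpr ⟨1, by simp [hn, Submonoid.smul_def]⟩
    refine ⟨m, ⟨hmk, (hN.pow n) ?_⟩, fun m' hm' ↦ hinj (hm'.1.trans hmk.symm)⟩
    simpa using hfm₀

end

theorem stmt10_general {S : Type*} [CommRing S] (t : S)
    {M : Type*} [AddCommGroup M] [Module S M]
    (htf : ∀ m : M, t • m = 0 → m = 0)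
    (x : LocalizedModule (Submonoid.powers t) M)
    (y : AdicCompletion (Ideal.span {t}) M)
    (hcompat :
      IsLocalizedModule.map (Submonoid.powers t)
        (LocalizedModule.mkLinearMap (Submonoid.powers t) M)
        (LocalizedModule.mkLinearMap (Submonoid.powers t)
          (AdicCompletion (Ideal.span {t}) M))
        (AdicCompletion.of (Ideal.span {t}) M) x =
      LocalizedModule.mkLinearMap (Submonoid.powers t)
        (AdicCompletion (Ideal.span {t}) M) y) :
    ∃! m : M,
      LocalizedModule.mkLinearMap (Submonoid.powers t) M m = x ∧
      AdicCompletion.of (Ideal.span {t}) M m = y := by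
  have ht : IsSMulRegular M t := IsSMulRegular.of_right_eq_zero_of_smul htf
  exact LocalizedModule.existsUnique_of_map_eq_mkLinearMap _ ht
    (AdicCompletion.isSMulRegular_span_singleton ht)
    (fun _ _ _ ↦ AdicCompletion.exists_pow_smul_eq_of_of_eq_pow_smul) x y hcompat

theorem stmt10 {S : Type*} [CommRing S] [IsNoetherianRing S] (t : S)
    {M : Type*} [AddCommGroup M] [Module S M] [Module.Finite S M]
    (htf : ∀ m : M, t • m = 0 → m = 0)
    (x : LocalizedModule (Submonoid.powers t) M)
    (y : AdicCompletion (Ideal.span {t}) M)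
    (hcompat :
      IsLocalizedModule.map (Submonoid.powers t)
        (LocalizedModule.mkLinearMap (Submonoid.powers t) M)
        (LocalizedModule.mkLinearMap (Submonoid.powers t)
          (AdicCompletion (Ideal.span {t}) M))
        (AdicCompletion.of (Ideal.span {t}) M) x =
      LocalizedModule.mkLinearMap (Submonoid.powers t)
        (AdicCompletion (Ideal.span {t}) M) y) :
    ∃! m : M,
      LocalizedModule.mkLinearMap (Submonoid.powers t) M m = x ∧
      AdicCompletion.of (Ideal.span {t}) M m = y :=
  stmt10_general t htf x y hcompat
end
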